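/- arXiv:2005.00125 — 2 statements merged into one kernel-verified Lean document; each statement's English description precedes it below -/
import Mathlib

section
/- Let k ≥ 2 be an integer and let A be a finite k-convex set of real numbers. Then |2^k A − (2^k − 1)A| ≫ |A|^{k+1} / 2^{k²}, i.e. there is an absolute constant c > 0 (independent of k and A) such that the set 2^k A − (2^k − 1)A has at least c·|A|^{k+1}·2^{−k²} elements. -/
open Finset Pointwise

/-- The list of consecutive differences of a list of reals. -/
def diffList : List ℝ → List ℝ
  | a :: b :: rest => (b - a) :: diffList (b :: rest)
  | _ => []

/-- `ListKConvex k l` means the increasing list `l` is `k`-convex: `l` is strictly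
increasing and its iterated difference lists of orders `1, …, k` are strictly increasing. -/
def ListKConvex : ℕ → List ℝ → Prop
  | 0, l => l.Chain' (· < ·)
  | k + 1, l => l.Chain' (· < ·) ∧ ListKConvex k (diffList l)

/-- A finite set of reals is `k`-convex if its increasing enumeration is `k`-convex. -/
def FinsetKConvex (k : ℕ) (A : Finset ℝ) : Prop :=
  ListKConvex k (A.sort (· ≤ ·))

/-- `iterSum n A = A + ⋯ + A` (`n` copies), with `iterSum 0 A = {0}`. -/
noncomputable def iterSum : ℕ → Finset ℝ → Finset ℝ
  | 0, _ => {0}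
  | n + 1, A => A + iterSum n A

/-!
Enumerate `A` as `a 0 < ⋯ < a (N - 1)`. Since `Δ^(i+1) a j = Δ^i a (j + 1) - Δ^i a j`, induction
gives `Δ^(i+1) a j ∈ 2^i A - 2^i A`, so every sum `∑ i ≤ k, Δ^i a (J i)` lies in
`2^k A - (2^k - 1) A`. By `k`-convexity, `Δ^0 a, …, Δ^k a` are increasing and `Δ^1 a, …, Δ^k a`
positive, so for strictly decreasing `J` the tail `∑ i ≥ m, Δ^i a (J i)` is smaller than
`Δ^m a (J m + 1)`; hence the sum is strictly increasing in `J` for the lexicographic order.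
The positions `J i = t i + (k - i) q` with `t i < q ≈ N / (k + 1)` therefore give `q^(k+1)`
distinct elements, and `(2 (k + 1))^(k+1) ≤ 2^(k² + 4)` turns this into the bound with `c = 1/16`
(when `N ≤ k + 1`, the trivial bound `N ≤ |2^k A - (2^k - 1) A|` is enough).
-/

open fwdDiff

lemma fwdDiff_iter_succ_apply {M G : Type*} [AddCommMonoid M] [AddCommGroup G] (h : M)
    (f : M → G) (n : ℕ) (y : M) :
    Δ_[h] ^[n + 1] f y = Δ_[h] ^[n] f (y + h) - Δ_[h] ^[n] f y := by
  rw [Function.iterate_succ_apply']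
  rfl

lemma iterSum_eq_nsmul (n : ℕ) (A : Finset ℝ) : iterSum n A = n • A := by
  induction n with
  | zero => rfl
  | succ n ih => rw [iterSum, ih, succ_nsmul']

lemma sub_sub_sub_self_eq_add_sub_add {α : Type*} [SubtractionCommMonoid α] (s : α) :
    s - s - (s - s) = s + s - (s + s) := by
  rw [sub_eq_add_neg (s - s), neg_sub, sub_add_sub_comm]

section Sumsets

variable {G : Type*} [AddCommGroup G] [DecidableEq G] {A : Finset G} {a : ℕ → G} {N : ℕ}

lemma Finset.add_mem_add_sub_add {x y : G} {X Y Z W : Finset G} (hx : x ∈ X - Y)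
    (hy : y ∈ Z - W) : x + y ∈ (X + Z) - (Y + W) := by
  rw [← sub_add_sub_comm]
  exact add_mem_add hx hy

lemma fwdDiff_iter_succ_mem (ha : ∀ j < N, a j ∈ A) {i j : ℕ} (hij : j + i + 1 < N) :
    Δ_[1] ^[i + 1] a j ∈ 2 ^ i • A - 2 ^ i • A := by
  induction i generalizing j with
  | zero =>
    rw [fwdDiff_iter_succ_apply, pow_zero, one_nsmul]
    exact sub_mem_sub (ha _ (by omega)) (ha _ (by omega))
  | succ i ih =>
    rw [fwdDiff_iter_succ_apply, pow_succ, mul_two, add_nsmul,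
      ← sub_sub_sub_self_eq_add_sub_add]
    exact sub_mem_sub (ih (by omega)) (ih (by omega))

lemma sum_fwdDiff_iter_mem (ha : ∀ j < N, a j ∈ A) {K : ℕ} {J : ℕ → ℕ}
    (hJ : ∀ i ≤ K, J i + i < N) :
    ∑ i ∈ range (K + 1), Δ_[1] ^[i] a (J i) ∈ 2 ^ K • A - (2 ^ K - 1) • A := by
  induction K with
  | zero => simpa using ha _ (hJ 0 le_rfl)
  | succ K ih =>
    have hsum := add_mem_add_sub_add (ih fun i hi => hJ i (by omega))
      (fwdDiff_iter_succ_mem ha (hJ (K + 1) le_rfl))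
    rw [← add_nsmul, ← add_nsmul] at hsum
    rw [sum_range_succ]
    convert hsum using 3 <;> rw [pow_succ] <;> omega

lemma card_le_card_nsmul_sub_nsmul {n : ℕ} (hn : n ≠ 0) (m : ℕ) : #A ≤ #(n • A - m • A) := by
  obtain rfl | hA := A.eq_empty_or_nonempty
  · simp
  · exact (card_le_card_nsmul hn).trans (card_le_card_sub_right hA.nsmul)

end Sumsets

/-- `Δ^i a j` involves only `a j, …, a (j + i)`, so `Iio (N - i)` is where `Δ^i a` is determined
by the first `N` terms of `a`. -/
def IsKConvexSeq {G : Type*} [AddCommGroup G] [Preorder G] (k N : ℕ) (a : ℕ → G) : Prop :=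
  ∀ i ≤ k, StrictMonoOn (Δ_[1] ^[i] a) (Set.Iio (N - i))

namespace IsKConvexSeq

variable {G : Type*} [AddCommGroup G] [PartialOrder G] [IsOrderedAddMonoid G] {k N : ℕ}
  {a : ℕ → G} {J J' : ℕ → ℕ}

lemma fwdDiff_iter_pos (h : IsKConvexSeq k N a) {i j : ℕ} (hi : 0 < i) (hik : i ≤ k)
    (hj : j < N - i) : 0 < Δ_[1] ^[i] a j := by
  obtain ⟨i, rfl⟩ := Nat.exists_eq_add_of_lt hi
  rw [zero_add, fwdDiff_iter_succ_apply, sub_pos]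
  exact h i (by omega) (by simp; omega) (by simp; omega) (by omega)

lemma sum_Ico_lt (h : IsKConvexSeq k N a) (hJN : ∀ i ≤ k, J i + i + 1 < N)
    (hJ : ∀ i < k, J (i + 1) < J i) {m : ℕ} (hm : m ≤ k) :
    ∑ i ∈ Ico m (k + 1), Δ_[1] ^[i] a (J i) < Δ_[1] ^[m] a (J m + 1) := by
  induction hm using Nat.decreasingInduction with
  | self =>
    rw [Nat.Ico_succ_singleton, sum_singleton]
    have := hJN k le_rfl
    exact h k le_rfl (by simp; omega) (by simp; omega) (by omega)
  | of_succ m hmk ih =>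
    have hJm := hJN m hmk.le
    have hJm' := hJN (m + 1) hmk
    calc ∑ i ∈ Ico m (k + 1), Δ_[1] ^[i] a (J i)
        = Δ_[1] ^[m] a (J m) + ∑ i ∈ Ico (m + 1) (k + 1), Δ_[1] ^[i] a (J i) :=
          sum_eq_sum_Ico_succ_bot (by omega) _
      _ < Δ_[1] ^[m] a (J m) + Δ_[1] ^[m + 1] a (J (m + 1) + 1) := by gcongr
      _ ≤ Δ_[1] ^[m] a (J m) + Δ_[1] ^[m + 1] a (J m) := by
          gcongr
          exact (h (m + 1) hmk).monotoneOn (by simp; omega) (by simp; omega) (hJ m hmk)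
      _ = Δ_[1] ^[m] a (J m + 1) := by rw [fwdDiff_iter_succ_apply, add_sub_cancel]

lemma sum_range_lt_sum_range (h : IsKConvexSeq k N a) (hJN : ∀ i ≤ k, J i + i + 1 < N)
    (hJ'N : ∀ i ≤ k, J' i + i + 1 < N) (hJ' : ∀ i < k, J' (i + 1) < J' i) {m : ℕ} (hm : m ≤ k)
    (heq : ∀ i < m, J' i = J i) (hlt : J' m < J m) :
    ∑ i ∈ range (k + 1), Δ_[1] ^[i] a (J' i) < ∑ i ∈ range (k + 1), Δ_[1] ^[i] a (J i) := by
  rw [← sum_range_add_sum_Ico _ (by omega : m ≤ k + 1),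
    ← sum_range_add_sum_Ico _ (by omega : m ≤ k + 1),
    sum_congr rfl fun i hi => by rw [heq i (mem_range.1 hi)]]
  gcongr _ + ?_
  have hJm := hJN m hm
  calc ∑ i ∈ Ico m (k + 1), Δ_[1] ^[i] a (J' i) < Δ_[1] ^[m] a (J' m + 1) :=
        h.sum_Ico_lt hJ'N hJ' hm
    _ ≤ Δ_[1] ^[m] a (J m) := (h m hm).monotoneOn (by simp; omega) (by simp; omega) hlt
    _ ≤ Δ_[1] ^[m] a (J m) + ∑ i ∈ Ico (m + 1) (k + 1), Δ_[1] ^[i] a (J i) := by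
        refine le_add_of_nonneg_right (sum_nonneg fun i hi => ?_)
        rw [mem_Ico] at hi
        have := hJN i (by omega)
        exact (h.fwdDiff_iter_pos (by omega) (by omega) (by omega)).le
    _ = ∑ i ∈ Ico m (k + 1), Δ_[1] ^[i] a (J i) := by
        rw [sum_eq_sum_Ico_succ_bot (by omega : m < k + 1)]

open Fin.NatCast in
/-- The `q ^ (k + 1)` distinct sums are `∑ i ≤ k, Δ^i a (t i + (k - i) q)` with `t i < q`. -/
lemma pow_le_card [DecidableEq G] {q : ℕ} {A : Finset G} (h : IsKConvexSeq k N a)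
    (ha : ∀ j < N, a j ∈ A) (hq : (k + 1) * q < N) :
    q ^ (k + 1) ≤ #(2 ^ k • A - (2 ^ k - 1) • A) := by
  set pos : (Fin (k + 1) → Fin q) → ℕ → ℕ := fun t i => t i + (k - i) * q
  set F : (Fin (k + 1) → Fin q) → G := fun t => ∑ i ∈ range (k + 1), Δ_[1] ^[i] a (pos t i)
  have hposN (t) : ∀ i ≤ k, pos t i + i + 1 < N := by
    intro i hi
    have hti := (t i).isLt
    have hsplit : (k - i) * q + i * q + q = (k + 1) * q := by
      rw [← add_mul, ← add_one_mul]; congr 1; omega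
    have : i ≤ i * q := Nat.le_mul_of_pos_right i (by omega)
    simp only [pos]
    omega
  have hpos_anti (t) : ∀ i < k, pos t (i + 1) < pos t i := by
    intro i hi
    have hti := (t ((i + 1 : ℕ) : Fin (k + 1))).isLt
    have hsplit : (k - (i + 1)) * q + q = (k - i) * q := by
      rw [← add_one_mul]; congr 1; omega
    simp only [pos]
    omega
  have hF : StrictMono fun t : Lex (Fin (k + 1) → Fin q) => F (ofLex t) := by
    intro t t' htt'
    obtain ⟨m, hagree, hlt⟩ : ∃ m, (∀ j < m, ofLex t j = ofLex t' j) ∧ ofLex t m < ofLex t' m :=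
      htt'
    refine h.sum_range_lt_sum_range (hposN _) (hposN _) (hpos_anti _) (Nat.le_of_lt_succ m.isLt)
      (fun i hi => ?_) ?_
    · have him : (i : Fin (k + 1)) < m := by
        rw [Fin.lt_def, Fin.val_cast_of_lt (by omega)]; exact hi
      simp only [pos, hagree _ him]
    · simpa only [pos, Fin.cast_val_eq_self, add_lt_add_iff_right, Fin.val_fin_lt] using hlt
  calc q ^ (k + 1) = #(univ : Finset (Fin (k + 1) → Fin q)) := by simp
    _ ≤ _ := card_le_card_of_injOn F
        (fun t _ => sum_fwdDiff_iter_mem ha fun i hi => by have := hposN t i hi; omega)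
        (hF.injective.comp toLex.injective).injOn

end IsKConvexSeq

lemma length_diffList (l : List ℝ) : (diffList l).length = l.length - 1 := by
  induction l with
  | nil => rfl
  | cons a t ih =>
    cases t with
    | nil => rfl
    | cons b r => simp only [diffList, List.length_cons] at ih ⊢; omega

lemma getD_diffList {l : List ℝ} {j : ℕ} (hj : j + 1 < l.length) :
    (diffList l).getD j 0 = l.getD (j + 1) 0 - l.getD j 0 := by
  induction l generalizing j with
  | nil => simp at hj
  | cons a t ih =>
    cases t with
    | nil => simp at hj
    | cons b r =>
      cases j with
      | zero => simp [diffList]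
      | succ j => simpa [diffList] using ih (j := j) (by simpa using hj)

lemma length_iterate_diffList (i : ℕ) (l : List ℝ) :
    (diffList^[i] l).length = l.length - i := by
  induction i with
  | zero => rfl
  | succ i ih => rw [Function.iterate_succ_apply', length_diffList, ih]; omega

lemma getD_iterate_diffList {l : List ℝ} {i j : ℕ} (h : j + i < l.length) :
    (diffList^[i] l).getD j 0 = Δ_[1] ^[i] (fun n => l.getD n 0) j := by
  induction i generalizing j with
  | zero => rfl
  | succ i ih =>
    rw [Function.iterate_succ_apply', getD_diffList (by rw [length_iterate_diffList]; omega),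
      ih (by omega), ih (by omega), fwdDiff_iter_succ_apply]

lemma ListKConvex.isChain_iterate_diffList {k : ℕ} {l : List ℝ} (h : ListKConvex k l) {i : ℕ}
    (hi : i ≤ k) : (diffList^[i] l).IsChain (· < ·) := by
  induction k generalizing l i with
  | zero =>
    obtain rfl : i = 0 := by omega
    exact h
  | succ k ih =>
    cases i with
    | zero => exact h.1
    | succ i => exact ih h.2 (by omega)

lemma List.IsChain.strictMonoOn_getD {α : Type*} [Preorder α] {l : List α} (d : α)
    (h : l.IsChain (· < ·)) : StrictMonoOn (fun j => l.getD j d) (Set.Iio l.length) := by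
  intro j hj j' hj' hjj'
  simp only [List.getD_eq_getElem _ _ hj, List.getD_eq_getElem _ _ hj']
  exact List.pairwise_iff_getElem.1 (List.isChain_iff_pairwise.1 h) j j' hj hj' hjj'

lemma ListKConvex.isKConvexSeq {k : ℕ} {l : List ℝ} (h : ListKConvex k l) :
    IsKConvexSeq k l.length (fun j => l.getD j 0) := by
  intro i hi
  refine ((h.isChain_iterate_diffList hi).strictMonoOn_getD 0).congr ?_ |>.mono ?_
  · intro j hj
    exact getD_iterate_diffList (by simp only [Set.mem_Iio, length_iterate_diffList] at hj; omega)
  · rw [length_iterate_diffList]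

lemma two_mul_succ_pow_succ_le (k : ℕ) : (2 * (k + 1)) ^ (k + 1) ≤ 2 ^ (k ^ 2 + 4) := by
  rcases Nat.lt_or_ge k 5 with hk | hk
  · interval_cases k <;> norm_num
  · obtain ⟨n, rfl⟩ := Nat.exists_eq_add_of_le' hk
    have hbase : 2 * (n + 5 + 1) ≤ 2 ^ (n + 4) := by
      have := n.lt_two_pow_self
      rw [pow_add]
      omega
    calc (2 * (n + 5 + 1)) ^ (n + 5 + 1) ≤ (2 ^ (n + 4)) ^ (n + 5 + 1) :=
          Nat.pow_le_pow_left hbase _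
      _ = 2 ^ ((n + 4) * (n + 5 + 1)) := (pow_mul _ _ _).symm
      _ ≤ 2 ^ ((n + 5) ^ 2 + 4) := Nat.pow_le_pow_right (by norm_num) (by nlinarith)

lemma FinsetKConvex.card_pow_succ_le {k : ℕ} {A : Finset ℝ} (hA : FinsetKConvex k A) :
    #A ^ (k + 1) ≤ 2 ^ (k ^ 2 + 4) * #(2 ^ k • A - (2 ^ k - 1) • A) := by
  set L := A.sort (· ≤ ·)
  have hconv : IsKConvexSeq k #A (fun j => L.getD j 0) := by
    simpa only [L, length_sort] using ListKConvex.isKConvexSeq hA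
  have hmem : ∀ j < #A, L.getD j 0 ∈ A := fun j hj => by
    rw [← mem_sort (· ≤ ·), List.getD_eq_getElem _ _ (by simpa [L] using hj)]
    exact List.getElem_mem _
  have hS : #A ≤ #(2 ^ k • A - (2 ^ k - 1) • A) := card_le_card_nsmul_sub_nsmul (by positivity) _
  have hk := two_mul_succ_pow_succ_le k
  have hle := Nat.mul_div_le (#A - 1) (k + 1)
  have hlt := Nat.lt_mul_div_succ (#A - 1) (b := k + 1) (by omega)
  generalize (#A - 1) / (k + 1) = q at hle hlt
  rw [mul_add_one] at hlt
  rcases Nat.eq_zero_or_pos q with rfl | hq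
  · have hAk : #A ≤ 2 * (k + 1) := by omega
    calc #A ^ (k + 1) = #A ^ k * #A := pow_succ _ _
      _ ≤ (2 * (k + 1)) ^ (k + 1) * #(2 ^ k • A - (2 ^ k - 1) • A) :=
          Nat.mul_le_mul ((Nat.pow_le_pow_left hAk k).trans (Nat.pow_le_pow_right (by omega)
            k.le_succ)) hS
      _ ≤ _ := Nat.mul_le_mul_right _ hk
  · have hkq : k + 1 ≤ (k + 1) * q := Nat.le_mul_of_pos_right _ hq
    have hAq : #A ≤ 2 * (k + 1) * q := by rw [mul_assoc]; omega
    calc #A ^ (k + 1) ≤ (2 * (k + 1) * q) ^ (k + 1) := Nat.pow_le_pow_left hAq _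
      _ = (2 * (k + 1)) ^ (k + 1) * q ^ (k + 1) := mul_pow _ _ _
      _ ≤ _ := Nat.mul_le_mul hk (hconv.pow_le_card hmem (by omega))

/-- If `k ≥ 2` and `A` is a finite `k`-convex set of reals, then
`|2^k A - (2^k - 1) A| ≫ |A|^(k+1) / 2^(k²)` with an absolute implied constant. -/
theorem stmt1 :
    ∃ c : ℝ, 0 < c ∧ ∀ (k : ℕ) (A : Finset ℝ), 2 ≤ k → FinsetKConvex k A →
      c * (A.card : ℝ) ^ (k + 1) / 2 ^ (k ^ 2) ≤
        ((iterSum (2 ^ k) A - iterSum (2 ^ k - 1) A).card : ℝ) := by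
  refine ⟨1 / 16, by norm_num, fun k A _ hA => ?_⟩
  have key : (#A : ℝ) ^ (k + 1) ≤ 2 ^ (k ^ 2) * 16 * #(2 ^ k • A - (2 ^ k - 1) • A) := by
    exact_mod_cast pow_add 2 (k ^ 2) 4 ▸ hA.card_pow_succ_le
  rw [iterSum_eq_nsmul, iterSum_eq_nsmul, div_le_iff₀ (by positivity)]
  linarith
end

section
/- Let A = {a₁ < a₂ < … < a_N} be a finite set of reals with N sufficiently large. Then there exist a subset H' ⊆ H(A) of size m and a positive integer L such that: (i) Lm ≥ N/(3 log₂ N); (ii) |A + A − A| ≥ Lm²/2; and (iii) for every h ∈ H', L ≤ |A_h| ≤ 2L. -/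
open Finset Pointwise

/-- `H(A)`: the set of consecutive differences `a_{i+1} - a_i` of a finite set of reals. -/
noncomputable def consecDiffs (A : Finset ℝ) : Finset ℝ :=
  (diffList (A.sort (· ≤ ·))).toFinset

/-- `A_h = {a_i ∈ A : a_{i+1} - a_i = h}`: the elements of `A` whose successor in `A` is
obtained by adding `h`. -/
noncomputable def diffFiber (A : Finset ℝ) (h : ℝ) : Finset ℝ :=
  A.filter (fun a => a + h ∈ A ∧ ∀ b ∈ A, a < b → a + h ≤ b)

/-! Sort the gaps `h ∈ H(A)` into dyadic classes according to `⌊log₂ |A_h|⌋`. The fibres `A_h`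
partition `A` minus its maximum, so some class `H'` of `m` gaps with `L ≤ |A_h| < 2L` carries at
least `(N - 1)/(log₂ N + 1)` elements of `A`, whence `2Lm(log₂ N + 1) ≥ N - 1`.

For the sumset bound, each triple `(h, a, x)` with `h, x ∈ H'`, `x ≤ h` and `a ∈ A_h` gives
`a + x = a + (c + x) - c ∈ A + A - A`, where `c ∈ A_x`. Since `a + x` lies in the gap `(a, a + h]`
of `A`, it determines the triple, and there are at least `L · m(m + 1)/2` triples. -/

lemma mem_diffList_iff {l : List ℝ} (hl : l.Pairwise (· < ·)) {h : ℝ} :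
    h ∈ diffList l ↔ 0 < h ∧ ∃ a ∈ l, a + h ∈ l ∧ ∀ b ∈ l, a < b → a + h ≤ b := by
  induction l with
  | nil => simp [diffList]
  | cons x tl ih =>
    rcases tl with _ | ⟨y, tl⟩
    · simp only [diffList, List.not_mem_nil, false_iff, List.mem_singleton]
      grind
    obtain ⟨hx, hsorted⟩ := List.pairwise_cons.mp hl
    have hxy : x < y := hx y List.mem_cons_self
    rw [diffList, List.mem_cons, ih hsorted, List.exists_mem_cons_iff _ x]
    rcases le_or_gt h 0 with hh | hh
    · have : h ≠ y - x := by linarith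
      simp [not_lt.mpr hh, this]
    have head_iff : (x + h ∈ x :: y :: tl ∧ ∀ b ∈ x :: y :: tl, x < b → x + h ≤ b) ↔
        h = y - x := by
      have hy : ∀ b ∈ tl, y < b := (List.pairwise_cons.mp hsorted).1
      simp only [List.mem_cons, forall_eq_or_imp]
      grind
    have tail_iff : ∀ a ∈ y :: tl,
        (a + h ∈ x :: y :: tl ∧ ∀ b ∈ x :: y :: tl, a < b → a + h ≤ b) ↔
          (a + h ∈ y :: tl ∧ ∀ b ∈ y :: tl, a < b → a + h ≤ b) := by
      intro a ha
      have hxa := hx a ha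
      have hax : a + h ≠ x := by linarith
      rw [List.mem_cons (l := y :: tl), List.forall_mem_cons]
      simp only [hax, false_or, not_lt.mpr hxa.le, false_imp_iff, true_and]
    simp only [hh, true_and, head_iff]
    rw [exists_congr fun a => and_congr_right (tail_iff a)]

lemma mem_diffFiber {A : Finset ℝ} {h a : ℝ} :
    a ∈ diffFiber A h ↔ a ∈ A ∧ a + h ∈ A ∧ ∀ b ∈ A, a < b → a + h ≤ b :=
  mem_filter

lemma mem_consecDiffs_iff {A : Finset ℝ} {h : ℝ} :
    h ∈ consecDiffs A ↔ 0 < h ∧ (diffFiber A h).Nonempty := by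
  simp only [consecDiffs, List.mem_toFinset, mem_diffList_iff (sortedLT_sort A).pairwise,
    mem_sort, Finset.Nonempty, mem_diffFiber]

lemma disjoint_diffFiber {A : Finset ℝ} {h k : ℝ} (hh : 0 < h) (hk : 0 < k) (hne : h ≠ k) :
    Disjoint (diffFiber A h) (diffFiber A k) := by
  refine disjoint_left.mpr fun a ha hb => hne ?_
  obtain ⟨-, hah, hsucc_h⟩ := mem_diffFiber.mp ha
  obtain ⟨-, hak, hsucc_k⟩ := mem_diffFiber.mp hb
  linarith [hsucc_h _ hak (by linarith), hsucc_k _ hah (by linarith)]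

lemma eq_of_add_eq_of_mem_diffFiber {A : Finset ℝ} {h k a b x y : ℝ}
    (ha : a ∈ diffFiber A h) (hb : b ∈ diffFiber A k) (hx : 0 < x) (hxh : x ≤ h)
    (hy : 0 < y) (hyk : y ≤ k) (hab : a + x = b + y) : a = b := by
  obtain ⟨haA, -, hsucc_a⟩ := mem_diffFiber.mp ha
  obtain ⟨hbA, -, hsucc_b⟩ := mem_diffFiber.mp hb
  rcases lt_trichotomy a b with hlt | heq | hgt
  · linarith [hsucc_a b hbA hlt]
  · exact heq
  · linarith [hsucc_b a haA hgt]

lemma biUnion_diffFiber (A : Finset ℝ) (hA : A.Nonempty) :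
    (consecDiffs A).biUnion (diffFiber A) = A.erase (A.max' hA) := by
  ext a
  simp only [mem_biUnion, mem_erase, mem_consecDiffs_iff]
  constructor
  · rintro ⟨h, ⟨hh, -⟩, ha⟩
    obtain ⟨haA, hahA, -⟩ := mem_diffFiber.mp ha
    refine ⟨fun hmax => ?_, haA⟩
    linarith [A.le_max' _ hahA]
  · rintro ⟨hne, haA⟩
    have hup : {b ∈ A | a < b}.Nonempty :=
      ⟨A.max' hA, mem_filter.mpr ⟨A.max'_mem hA, lt_of_le_of_ne (A.le_max' a haA) hne⟩⟩
    set s := {b ∈ A | a < b}.min' hup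
    obtain ⟨hsA, has⟩ := mem_filter.mp ({b ∈ A | a < b}.min'_mem hup)
    have ha : a ∈ diffFiber A (s - a) := by
      refine mem_diffFiber.mpr ⟨haA, by simpa using hsA, fun b hbA hab => ?_⟩
      simpa using min'_le _ b (mem_filter.mpr ⟨hbA, hab⟩)
    exact ⟨s - a, ⟨sub_pos.mpr has, a, ha⟩, ha⟩

lemma sum_card_diffFiber (A : Finset ℝ) :
    ∑ h ∈ consecDiffs A, #(diffFiber A h) = #A - 1 := by
  rcases A.eq_empty_or_nonempty with rfl | hA
  · simp [consecDiffs, diffList]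
  rw [← card_biUnion, biUnion_diffFiber A hA, card_erase_of_mem (A.max'_mem hA)]
  intro h hh k hk hne
  exact disjoint_diffFiber (mem_consecDiffs_iff.mp hh).1 (mem_consecDiffs_iff.mp hk).1 hne

lemma sum_card_diffFiber_mul_card_le (A C : Finset ℝ) (hC : C ⊆ consecDiffs A) :
    ∑ h ∈ C, #(diffFiber A h) * #{x ∈ C | x ≤ h} ≤ #(A + A - A) := by
  have hpos : ∀ h ∈ C, 0 < h := fun h hh => (mem_consecDiffs_iff.mp (hC hh)).1
  calc ∑ h ∈ C, #(diffFiber A h) * #{x ∈ C | x ≤ h}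
      = #(C.sigma fun h => diffFiber A h ×ˢ {x ∈ C | x ≤ h}) := by
        simp only [card_sigma, card_product]
    _ ≤ #(A + A - A) := card_le_card_of_injOn (fun p => p.2.1 + p.2.2) ?_ ?_
  · rintro ⟨h, a, x⟩ hp
    simp only [coe_sigma, Set.mem_sigma_iff, coe_product, Set.mem_prod, mem_coe, mem_filter] at hp
    obtain ⟨-, ha, hx, -⟩ := hp
    obtain ⟨-, c, hc⟩ := mem_consecDiffs_iff.mp (hC hx)
    obtain ⟨hcA, hcxA, -⟩ := mem_diffFiber.mp hc
    have hsum := sub_mem_sub (add_mem_add (mem_diffFiber.mp ha).1 hcxA) hcA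
    rwa [show a + (c + x) - c = a + x by ring] at hsum
  · rintro ⟨h, a, x⟩ hp ⟨k, b, y⟩ hq (hsum : a + x = b + y)
    simp only [coe_sigma, Set.mem_sigma_iff, coe_product, Set.mem_prod, mem_coe, mem_filter] at hp hq
    obtain ⟨hh, ha, hx, hxh⟩ := hp
    obtain ⟨hk, hb, hy, hyk⟩ := hq
    obtain rfl : a = b :=
      eq_of_add_eq_of_mem_diffFiber ha hb (hpos x hx) hxh (hpos y hy) hyk hsum
    obtain rfl : x = y := add_left_cancel hsum
    obtain rfl : h = k := by
      by_contra hne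
      exact disjoint_left.mp (disjoint_diffFiber (hpos h hh) (hpos k hk) hne) ha hb
    rfl

lemma sq_card_le_two_mul_sum_card_filter_le {α : Type*} [LinearOrder α] (C : Finset α) :
    #C ^ 2 ≤ 2 * ∑ x ∈ C, #{y ∈ C | y ≤ x} := by
  have hswap : ∑ x ∈ C, #{y ∈ C | x ≤ y} = ∑ x ∈ C, #{y ∈ C | y ≤ x} := by
    simp only [card_filter]
    exact sum_comm
  have hcover : ∀ x ∈ C, #C ≤ #{y ∈ C | y ≤ x} + #{y ∈ C | x ≤ y} := fun x _ =>
    (card_le_card fun y hy => by simp [hy, le_total]).trans (card_union_le _ _)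
  calc #C ^ 2 = ∑ _ ∈ C, #C := by rw [sum_const, smul_eq_mul, sq]
    _ ≤ ∑ x ∈ C, (#{y ∈ C | y ≤ x} + #{y ∈ C | x ≤ y}) := sum_le_sum hcover
    _ = 2 * ∑ x ∈ C, #{y ∈ C | y ≤ x} := by rw [sum_add_distrib, hswap, two_mul]

lemma mul_sq_card_le_card_add_sub {A C : Finset ℝ} {L : ℕ} (hC : C ⊆ consecDiffs A)
    (hL : ∀ h ∈ C, L ≤ #(diffFiber A h)) : L * #C ^ 2 ≤ 2 * #(A + A - A) :=
  calc L * #C ^ 2 ≤ 2 * (L * ∑ h ∈ C, #{x ∈ C | x ≤ h}) := by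
        nlinarith [sq_card_le_two_mul_sum_card_filter_le C]
    _ ≤ 2 * ∑ h ∈ C, #(diffFiber A h) * #{x ∈ C | x ≤ h} := by
        rw [mul_sum]
        gcongr with h hh
        exact hL h hh
    _ ≤ 2 * #(A + A - A) := by
        gcongr
        exact sum_card_diffFiber_mul_card_le A C hC

lemma exists_dyadic_level_sum_le {ι : Type*} (s : Finset ι) (f : ι → ℕ) (n : ℕ)
    (hf : ∀ i ∈ s, 0 < f i ∧ f i ≤ n) :
    ∃ t ⊆ s, ∃ L > 0, (∀ i ∈ t, L ≤ f i ∧ f i ≤ 2 * L) ∧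
      ∑ i ∈ s, f i ≤ 2 * (Nat.log 2 n + 1) * (L * #t) := by
  set K := Nat.log 2 n + 1
  have hmaps : ∀ i ∈ s, Nat.log 2 (f i) ∈ range K := fun i hi =>
    mem_range.mpr (Nat.lt_succ_of_le (Nat.log_mono_right (hf i hi).2))
  obtain ⟨j, -, hj⟩ := (range K).exists_max_image
    (fun j => ∑ i ∈ {i ∈ s | Nat.log 2 (f i) = j}, f i) ⟨0, mem_range.mpr (Nat.succ_pos _)⟩
  have hband : ∀ i ∈ {i ∈ s | Nat.log 2 (f i) = j}, 2 ^ j ≤ f i ∧ f i ≤ 2 * 2 ^ j := by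
    intro i hi
    obtain ⟨his, rfl⟩ := mem_filter.mp hi
    have := Nat.lt_pow_succ_log_self one_lt_two (f i)
    exact ⟨Nat.pow_log_le_self 2 (hf i his).1.ne', by rw [pow_succ] at this; omega⟩
  refine ⟨_, filter_subset _ _, 2 ^ j, by positivity, hband, ?_⟩
  calc ∑ i ∈ s, f i = ∑ j ∈ range K, ∑ i ∈ {i ∈ s | Nat.log 2 (f i) = j}, f i :=
        (sum_fiberwise_of_maps_to hmaps _).symm
    _ ≤ K * ∑ i ∈ {i ∈ s | Nat.log 2 (f i) = j}, f i := by
        simpa using sum_le_card_nsmul _ _ _ hj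
    _ ≤ K * (#({i ∈ s | Nat.log 2 (f i) = j}) * (2 * 2 ^ j)) := by
        gcongr
        simpa using sum_le_card_nsmul _ _ _ fun i hi => (hband i hi).2
    _ = 2 * K * (2 ^ j * #({i ∈ s | Nat.log 2 (f i) = j})) := by ring

lemma div_three_logb_le {N x : ℕ} (hN : 8 ≤ N) (hx : N - 1 ≤ 2 * (Nat.log 2 N + 1) * x) :
    (N : ℝ) / (3 * Real.logb 2 N) ≤ x := by
  have hlog : (Nat.log 2 N : ℝ) ≤ Real.logb 2 N := by exact_mod_cast Real.natLog_le_logb N 2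
  have hlog3 : (3 : ℝ) ≤ Nat.log 2 N := by exact_mod_cast Nat.le_log_of_pow_le one_lt_two hN
  have hx1 : (1 : ℝ) ≤ x := by
    exact_mod_cast Nat.one_le_iff_ne_zero.mpr (by rintro rfl; omega)
  have hNx : (N : ℝ) ≤ 2 * (Nat.log 2 N + 1) * x + 1 := by
    exact_mod_cast (by omega : N ≤ 2 * (Nat.log 2 N + 1) * x + 1)
  rw [div_le_iff₀ (by linarith)]
  nlinarith

lemma iterSum_two_sub_iterSum_one (A : Finset ℝ) : iterSum 2 A - iterSum 1 A = A + A - A := by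
  simp [iterSum, singleton_zero]

/-- Dyadic pigeonhole lemma: for a sufficiently large finite set `A` of `N` reals there are
`H' ⊆ H(A)` of size `m` and a positive integer `L` with (i) `Lm ≥ N/(3 log₂ N)`,
(ii) `|A + A - A| ≥ Lm²/2`, and (iii) `L ≤ |A_h| ≤ 2L` for every `h ∈ H'`. -/
theorem stmt11 :
    ∃ N₀ : ℕ, ∀ A : Finset ℝ, N₀ ≤ A.card →
      ∃ H' : Finset ℝ, H' ⊆ consecDiffs A ∧ ∃ L : ℕ, 0 < L ∧
        (A.card : ℝ) / (3 * Real.logb 2 A.card) ≤ (L : ℝ) * H'.card ∧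
        (L : ℝ) * (H'.card : ℝ) ^ 2 / 2 ≤ ((iterSum 2 A - iterSum 1 A).card : ℝ) ∧
        ∀ h ∈ H', L ≤ (diffFiber A h).card ∧ (diffFiber A h).card ≤ 2 * L := by
  refine ⟨8, fun A hN => ?_⟩
  obtain ⟨H', hH', L, hL, hband, htotal⟩ :=
    exists_dyadic_level_sum_le (consecDiffs A) (fun h => #(diffFiber A h)) #A fun h hh =>
      ⟨card_pos.mpr (mem_consecDiffs_iff.mp hh).2, card_le_card (filter_subset _ _)⟩
  rw [sum_card_diffFiber] at htotal
  have hsumset := mul_sq_card_le_card_add_sub hH' fun h hh => (hband h hh).1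
  refine ⟨H', hH', L, hL, ?_, ?_, hband⟩
  · exact_mod_cast div_three_logb_le hN htotal
  · rw [iterSum_two_sub_iterSum_one, div_le_iff₀ two_pos]
    exact_mod_cast (by linarith : L * #H' ^ 2 ≤ #(A + A - A) * 2)
end
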